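/- Let m ≥ 2 and n = 2^{m+1} - 4. In ℤ/2[w2, w3], define for 0 ≤ i ≤ m the polynomial P_i = Σ w2^p w3^{(2^i + n + 1 - 2p)/3}, where the sum is over all p with 0 ≤ p < 2^m whose binary digits end in i zeros, i.e., ε_m(p) = (q, 0,...,0) with q ∈ Δ_{m-i} (and (2^i+n+1-2p) divisible by 3). Then for all 0 ≤ i ≤ m-2, the S-polynomial relation S(P_i, P_{i+1}) = P_{i+2} holds, where S(F,G) = (LCM(LT(F),LT(G))/LT(F))·F + (LCM(LT(F),LT(G))/LT(G))·G using the lexicographic monomial order with w2 > w3. -/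

import Mathlib

/-!
Write `P_i = ∑_{p ∈ S_i} w2^p w3^e` with `2p + 3e = 2^i + n + 1`. The largest `p ∈ S_i` is
`2^m - 2^i` (the all-ones string), so `LT(P_i) = w2^(2^m - 2^i) w3^(2^i - 1)` and
`S(P_i, P_{i+1}) = w3^(2^i) P_i + w2^(2^i) P_{i+1}`. The recursion `Δ = (2Δ + 1) ⊔ 4Δ` splits
`S_i` into `S_{i+1} + 2^i` and `S_{i+2}`, giving `w3^(2^i) P_i = w2^(2^i) P_{i+1} + P_{i+2}`;
in characteristic `2` the two copies of `w2^(2^i) P_{i+1}` cancel.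
-/

open MvPolynomial

open scoped Classical in
/-- `InDelta k p` : the `k`-bit binary string of `p` lies in `Δ_k`
(convention `p_{-1} = 1`): whenever `p_{l-1} = 1` and `p_l = ⋯ = p_{l+2t} = 0`,
then `p_{l+2t+1} = 0`. -/
def InDelta (k p : ℕ) : Prop :=
  ∀ l t : ℕ, l + 2 * t + 1 ≤ k - 1 →
    (l = 0 ∨ p.testBit (l - 1) = true) →
    (∀ j, l ≤ j → j ≤ l + 2 * t → p.testBit j = false) →
    p.testBit (l + 2 * t + 1) = false

open scoped Classical in
/-- The polynomial `P_i = Σ w2^p w3^((2^i + n + 1 - 2p)/3)` (with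
`n = 2^(m+1) - 4`), summed over all `p < 2^m` whose `m`-bit binary expansion
has `i` trailing zeros followed by a string in `Δ_{m-i}`, and such that
`2^i + n + 1 - 2p` is divisible by `3`.  Here `X 0 = w2`, `X 1 = w3`. -/
noncomputable def Ppoly (m i : ℕ) : MvPolynomial (Fin 2) (ZMod 2) :=
  ∑ p ∈ (Finset.range (2 ^ m)).filter
      (fun p => 2 ^ i ∣ p ∧ InDelta (m - i) (p / 2 ^ i) ∧
        3 ∣ (2 ^ i + (2 ^ (m + 1) - 4) + 1 - 2 * p)),
    X 0 ^ p * X 1 ^ ((2 ^ i + (2 ^ (m + 1) - 4) + 1 - 2 * p) / 3)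

/-- The exponent pair `(deg_{w2}, deg_{w3})` of a monomial, in the
lexicographic order with `w2 > w3`. -/
def expPair (d : Fin 2 →₀ ℕ) : ℕ ×ₗ ℕ := toLex (d 0, d 1)

/-- The leading exponent of a polynomial: the lexicographically largest
exponent pair in its support (and `(0,0)` for the zero polynomial). -/
noncomputable def leadExp (f : MvPolynomial (Fin 2) (ZMod 2)) : ℕ × ℕ :=
  ofLex (WithBot.unbotD (toLex (0, 0)) ((f.support.image expPair).max))

/-- The `S`-polynomial
`S(F,G) = (LCM(LT F, LT G)/LT F)·F + (LCM(LT F, LT G)/LT G)·G`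
(over `ℤ/2`, where leading coefficients are `1`). -/
noncomputable def Spoly (F G : MvPolynomial (Fin 2) (ZMod 2)) :
    MvPolynomial (Fin 2) (ZMod 2) :=
  let a := leadExp F
  let b := leadExp G
  let L := (max a.1 b.1, max a.2 b.2)
  X 0 ^ (L.1 - a.1) * X 1 ^ (L.2 - a.2) * F +
    X 0 ^ (L.1 - b.1) * X 1 ^ (L.2 - b.2) * G

def IsDelta (s : ℕ) : Prop :=
  ∀ l t : ℕ, (l = 0 ∨ s.testBit (l - 1) = true) →
    (∀ j, l ≤ j → j ≤ l + 2 * t → s.testBit j = false) →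
    s.testBit (l + 2 * t + 1) = false

theorem inDelta_iff_isDelta {k s : ℕ} (hs : s < 2 ^ k) : InDelta k s ↔ IsDelta s := by
  refine ⟨fun H l t h₁ h₂ => ?_, fun H l t _ => H l t⟩
  by_cases hl : l + 2 * t + 1 ≤ k - 1
  · exact H l t hl h₁ h₂
  · exact Nat.testBit_lt_two_pow (hs.trans_le (Nat.pow_le_pow_right two_pos (by omega)))

theorem isDelta_two_mul_add_one (u : ℕ) : IsDelta (2 * u + 1) ↔ IsDelta u := by
  have shift : ∀ j, (2 * u + 1).testBit (j + 1) = u.testBit j := fun j => by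
    rw [Nat.testBit_add_one]; congr 1; omega
  have bit₀ : (2 * u + 1).testBit 0 = true := by simp
  constructor
  · intro H l t h₁ h₂
    rw [← shift, show l + 2 * t + 1 + 1 = l + 1 + 2 * t + 1 by omega]
    refine H (l + 1) t (Or.inr ?_) fun j hj hj' => ?_
    · rcases l with _ | l
      · exact bit₀
      · simpa [shift] using h₁
    · obtain ⟨j, rfl⟩ : ∃ j', j = j' + 1 := ⟨j - 1, by omega⟩
      rw [shift]; exact h₂ j (by omega) (by omega)
  · intro H l t h₁ h₂
    rcases l with _ | l
    · simp [h₂ 0 le_rfl (by omega)] at bit₀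
    rw [show l + 1 + 2 * t + 1 = l + 2 * t + 1 + 1 by omega, shift]
    refine H l t ?_ fun j hj hj' => by rw [← shift]; exact h₂ (j + 1) (by omega) (by omega)
    rcases l with _ | l
    · exact Or.inl rfl
    · simpa [shift] using h₁

theorem isDelta_four_mul (v : ℕ) : IsDelta (4 * v) ↔ IsDelta v := by
  have shift : ∀ j, (4 * v).testBit (j + 2) = v.testBit j := fun j => by
    rw [Nat.testBit_add_one, Nat.testBit_add_one]; congr 1; omega
  have low : ∀ j < 2, (4 * v).testBit j = false := fun j hj => by
    interval_cases j
    · simp only [Nat.testBit_zero, decide_eq_false_iff_not]; omega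
    · rw [Nat.testBit_add_one]
      simp only [Nat.testBit_zero, decide_eq_false_iff_not]; omega
  constructor
  · intro H l t h₁ h₂
    have zeros : ∀ j, l + 2 ≤ j → j ≤ l + 2 + 2 * t → (4 * v).testBit j = false :=
      fun j hj hj' => by
        obtain ⟨j, rfl⟩ : ∃ j', j = j' + 2 := ⟨j - 2, by omega⟩
        rw [shift]; exact h₂ j (by omega) (by omega)
    rcases l with _ | l
    · rw [← shift, show 0 + 2 * t + 1 + 2 = 0 + 2 * (t + 1) + 1 by omega]
      refine H 0 (t + 1) (Or.inl rfl) fun j _ hj => ?_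
      rcases Nat.lt_or_ge j 2 with hj₂ | hj₂
      · exact low j hj₂
      · exact zeros j (by omega) (by omega)
    · rw [← shift, show l + 1 + 2 * t + 1 + 2 = l + 3 + 2 * t + 1 by omega]
      refine H (l + 3) t (Or.inr ?_) zeros
      simpa [shift] using h₁
  · intro H l t h₁ h₂
    have zeros : ∀ j, l ≤ j + 2 → j + 2 ≤ l + 2 * t → v.testBit j = false :=
      fun j hj hj' => by rw [← shift]; exact h₂ (j + 2) hj hj'
    rcases Nat.eq_zero_or_pos l with rfl | hl
    · rcases t with _ | t
      · exact low 1 (by omega)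
      · rw [show 0 + 2 * (t + 1) + 1 = 0 + 2 * t + 1 + 2 by omega, shift]
        exact H 0 t (Or.inl rfl) fun j _ hj => zeros j (by omega) (by omega)
    · have hbit := h₁.resolve_left hl.ne'
      obtain ⟨l, rfl⟩ : ∃ l', l = l' + 3 := ⟨l - 3, by
        by_contra h; simp [low (l - 1) (by omega)] at hbit⟩
      rw [show l + 3 + 2 * t + 1 = l + 1 + 2 * t + 1 + 2 by omega, shift]
      refine H (l + 1) t (Or.inr ?_) fun j hj hj' => zeros j (by omega) (by omega)
      simpa [shift] using hbit

theorem IsDelta.four_dvd_of_even {s : ℕ} (hs : IsDelta s) (heven : Even s) : 4 ∣ s := by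
  have bit₀ : s.testBit 0 = false := by
    simpa only [Nat.testBit_zero, decide_eq_false_iff_not, Nat.mod_two_not_eq_one, Nat.even_iff]
      using heven
  have bit₁ := hs 0 0 (Or.inl rfl) fun j _ hj => by rwa [show j = 0 by omega]
  rw [zero_add, Nat.testBit_add_one, Nat.testBit_zero] at bit₁
  simp only [Nat.even_iff, decide_eq_false_iff_not] at heven bit₁
  omega

theorem isDelta_iff {s : ℕ} :
    IsDelta s ↔ (∃ u, IsDelta u ∧ s = 2 * u + 1) ∨ ∃ v, IsDelta v ∧ s = 4 * v := by
  refine ⟨fun hs => ?_, ?_⟩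
  · rcases Nat.even_or_odd' s with ⟨u, rfl | rfl⟩
    · obtain ⟨v, hv⟩ := hs.four_dvd_of_even (even_two_mul u)
      exact Or.inr ⟨v, (isDelta_four_mul v).mp (hv ▸ hs), hv⟩
    · exact Or.inl ⟨u, (isDelta_two_mul_add_one u).mp hs, rfl⟩
  · rintro (⟨u, hu, rfl⟩ | ⟨v, hv, rfl⟩)
    exacts [(isDelta_two_mul_add_one u).mpr hu, (isDelta_four_mul v).mpr hv]

theorem isDelta_two_pow_sub_one (k : ℕ) : IsDelta (2 ^ k - 1) := by
  intro l t _ h₂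
  have hkl : k ≤ l := by
    by_contra! hlk
    simpa [hlk] using h₂ l le_rfl (by omega)
  simp only [Nat.testBit_two_pow_sub_one, decide_eq_false_iff_not]
  omega

theorem Nat.add_le_of_dvd_of_lt {a b c : ℕ} (hb : a ∣ b) (hc : a ∣ c) (h : b < c) :
    b + a ≤ c := by
  have := Nat.le_of_dvd (Nat.sub_pos_of_lt h) (Nat.dvd_sub hc hb)
  omega

section weightedMonomial

variable {R : Type*} [CommSemiring R]

/-- The monomial `w2 ^ p * w3 ^ e` of weighted degree `N = 2 * p + 3 * e`. -/
noncomputable def weightedMonomial (N p : ℕ) : MvPolynomial (Fin 2) R :=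
  X 0 ^ p * X 1 ^ ((N - 2 * p) / 3)

theorem weightedMonomial_eq_monomial (N p : ℕ) :
    (weightedMonomial N p : MvPolynomial (Fin 2) R) =
      monomial (Finsupp.single 0 p + Finsupp.single 1 ((N - 2 * p) / 3)) 1 := by
  rw [weightedMonomial, X_pow_eq_monomial, X_pow_eq_monomial, monomial_mul, one_mul]

theorem X_one_pow_mul_weightedMonomial {N p : ℕ} (h : 2 * p ≤ N) (k : ℕ) :
    X 1 ^ k * (weightedMonomial N p : MvPolynomial (Fin 2) R) =
      weightedMonomial (N + 3 * k) p := by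
  rw [weightedMonomial, weightedMonomial,
    show (N + 3 * k - 2 * p) / 3 = (N - 2 * p) / 3 + k by omega]
  ring

theorem X_zero_pow_mul_weightedMonomial (N p k : ℕ) :
    X 0 ^ k * (weightedMonomial N p : MvPolynomial (Fin 2) R) =
      weightedMonomial (N + 2 * k) (p + k) := by
  rw [weightedMonomial, weightedMonomial, show N + 2 * k - 2 * (p + k) = N - 2 * p by omega]
  ring

end weightedMonomial

theorem leadExp_eq_of_forall_le {f : MvPolynomial (Fin 2) (ZMod 2)} {d₀ : Fin 2 →₀ ℕ}
    (h₀ : d₀ ∈ f.support) (hmax : ∀ d ∈ f.support, expPair d ≤ expPair d₀) :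
    leadExp f = (d₀ 0, d₀ 1) := by
  have : (f.support.image expPair).max = expPair d₀ :=
    le_antisymm (Finset.max_le fun x hx => by
        obtain ⟨d, hd, rfl⟩ := Finset.mem_image.mp hx
        exact WithBot.coe_le_coe.mpr (hmax d hd))
      (Finset.le_max (Finset.mem_image_of_mem _ h₀))
  rw [leadExp, this]
  rfl

theorem leadExp_sum_weightedMonomial {N p₀ : ℕ} {T : Finset ℕ} (h₀ : p₀ ∈ T)
    (hmax : ∀ p ∈ T, p ≤ p₀) :
    leadExp (∑ p ∈ T, weightedMonomial N p) = (p₀, (N - 2 * p₀) / 3) := by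
  classical
  set e : ℕ → Fin 2 →₀ ℕ :=
    fun p => Finsupp.single 0 p + Finsupp.single 1 ((N - 2 * p) / 3)
  have he : ∀ p, e p 0 = p ∧ e p 1 = (N - 2 * p) / 3 := fun p => by simp [e]
  simp only [weightedMonomial_eq_monomial]
  rw [show (p₀, (N - 2 * p₀) / 3) = (e p₀ 0, e p₀ 1) by simp [he]]
  refine leadExp_eq_of_forall_le (d₀ := e p₀) ?_ fun d hd => ?_
  · rw [mem_support_iff, coeff_sum, Finset.sum_eq_single p₀ (fun p _ hp => ?_) (absurd h₀)]
    · rw [coeff_monomial, if_pos rfl]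
      exact one_ne_zero
    · rw [coeff_monomial, if_neg]
      exact fun h => hp (by simpa [(he p).1, (he p₀).1] using congrArg (· 0) h)
  · obtain ⟨p, hp, hd⟩ := Finset.mem_biUnion.mp (support_sum hd)
    rw [Finset.mem_singleton.mp (support_monomial_subset hd), expPair, expPair,
      Prod.Lex.toLex_le_toLex, (he p).1, (he p₀).1]
    rcases (hmax p hp).lt_or_eq with h | rfl
    exacts [Or.inl h, Or.inr ⟨rfl, le_rfl⟩]

/-- The weighted degree `2 ^ i + n + 1` of `P_i`, where `n = 2 ^ (m + 1) - 4`. -/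
def Pdeg (m i : ℕ) : ℕ := 2 ^ i + (2 ^ (m + 1) - 4) + 1

open scoped Classical in
noncomputable def Pset (m i : ℕ) : Finset ℕ :=
  (Finset.range (2 ^ m)).filter
    (fun p => 2 ^ i ∣ p ∧ InDelta (m - i) (p / 2 ^ i) ∧ 3 ∣ Pdeg m i - 2 * p)

theorem Ppoly_eq_sum (m i : ℕ) :
    Ppoly m i = ∑ p ∈ Pset m i, weightedMonomial (Pdeg m i) p :=
  rfl

theorem Pdeg_succ (m i : ℕ) : Pdeg m (i + 1) = Pdeg m i + 2 ^ i := by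
  rw [Pdeg, Pdeg, pow_succ]
  omega

theorem Pdeg_add_two (m i : ℕ) : Pdeg m (i + 2) = Pdeg m i + 3 * 2 ^ i := by
  rw [Pdeg_succ, Pdeg_succ, pow_succ]
  ring

theorem two_mul_le_Pdeg {m p : ℕ} (i : ℕ) (hp : p < 2 ^ m) : 2 * p ≤ Pdeg m i := by
  have := Nat.one_le_two_pow (n := i)
  rw [Pdeg, pow_succ]
  omega

theorem mem_Pset {m i p : ℕ} (hi : i ≤ m) :
    p ∈ Pset m i ↔
      p < 2 ^ m ∧ (∃ s, IsDelta s ∧ p = 2 ^ i * s) ∧ 3 ∣ Pdeg m i - 2 * p := by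
  simp only [Pset, Finset.mem_filter, Finset.mem_range]
  have lt_of_mul_lt : ∀ s, 2 ^ i * s < 2 ^ m → s < 2 ^ (m - i) := fun s hs =>
    Nat.lt_of_mul_lt_mul_left (a := 2 ^ i) (by rwa [← pow_add, Nat.add_sub_cancel' hi])
  refine and_congr_right fun hp => ?_
  rw [← and_assoc]
  refine and_congr_left fun _ => ⟨?_, ?_⟩
  · rintro ⟨⟨s, rfl⟩, hs⟩
    rw [Nat.mul_div_cancel_left s (by positivity), inDelta_iff_isDelta (lt_of_mul_lt s hp)] at hs
    exact ⟨s, hs, rfl⟩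
  · rintro ⟨s, hs, rfl⟩
    rw [Nat.mul_div_cancel_left s (by positivity), inDelta_iff_isDelta (lt_of_mul_lt s hp)]
    exact ⟨dvd_mul_right _ _, hs⟩

theorem add_two_pow_le_of_mem_Pset {m i p : ℕ} (hi : i ≤ m) (hp : p ∈ Pset m i) :
    p + 2 ^ i ≤ 2 ^ m := by
  simp only [Pset, Finset.mem_filter, Finset.mem_range] at hp
  exact Nat.add_le_of_dvd_of_lt hp.2.1 (pow_dvd_pow 2 hi) hp.1

theorem two_pow_sub_two_pow_mem_Pset {m i : ℕ} (hm : 0 < m) (hi : i ≤ m) :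
    2 ^ m - 2 ^ i ∈ Pset m i := by
  have := Nat.one_le_two_pow (n := i)
  have := Nat.pow_le_pow_right two_pos hi
  have : 2 ≤ 2 ^ m := by simpa using Nat.pow_le_pow_right two_pos hm
  refine (mem_Pset hi).mpr ⟨by omega, ⟨2 ^ (m - i) - 1, isDelta_two_pow_sub_one _, ?_⟩, ?_⟩
  · rw [Nat.mul_sub_one, ← pow_add, Nat.add_sub_cancel' hi]
  · rw [Pdeg, pow_succ]
    omega

theorem leadExp_Ppoly {m i : ℕ} (hm : 0 < m) (hi : i ≤ m) :
    leadExp (Ppoly m i) = (2 ^ m - 2 ^ i, 2 ^ i - 1) := by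
  have := Nat.one_le_two_pow (n := i)
  have := Nat.pow_le_pow_right two_pos hi
  have : 2 ≤ 2 ^ m := by simpa using Nat.pow_le_pow_right two_pos hm
  rw [Ppoly_eq_sum, leadExp_sum_weightedMonomial (two_pow_sub_two_pow_mem_Pset hm hi)
    fun p hp => by have := add_two_pow_le_of_mem_Pset hi hp; omega, Pdeg, pow_succ]
  congr 1
  omega

theorem spoly_Ppoly {m i : ℕ} (hi : i + 1 ≤ m) :
    Spoly (Ppoly m i) (Ppoly m (i + 1)) =
      X 1 ^ 2 ^ i * Ppoly m i + X 0 ^ 2 ^ i * Ppoly m (i + 1) := by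
  have h₁ := Nat.one_le_two_pow (n := i)
  have h₂ := Nat.pow_le_pow_right two_pos hi
  rw [pow_succ] at h₂
  rw [Spoly, leadExp_Ppoly (by omega) (by omega), leadExp_Ppoly (by omega) hi, pow_succ]
  dsimp only
  rw [show max (2 ^ m - 2 ^ i) (2 ^ m - 2 ^ i * 2) - (2 ^ m - 2 ^ i) = 0 by omega,
    show max (2 ^ i - 1) (2 ^ i * 2 - 1) - (2 ^ i - 1) = 2 ^ i by omega,
    show max (2 ^ m - 2 ^ i) (2 ^ m - 2 ^ i * 2) - (2 ^ m - 2 ^ i * 2) = 2 ^ i by omega,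
    show max (2 ^ i - 1) (2 ^ i * 2 - 1) - (2 ^ i * 2 - 1) = 0 by omega]
  ring

theorem Pset_eq_union {m i : ℕ} (hi : i + 2 ≤ m) :
    Pset m i = (Pset m (i + 1)).map (addRightEmbedding (2 ^ i)) ∪ Pset m (i + 2) := by
  ext p
  simp only [Finset.mem_union, Finset.mem_map, addRightEmbedding_apply,
    mem_Pset (show i ≤ m by omega), mem_Pset (show i + 1 ≤ m by omega), mem_Pset hi]
  have hdeg₁ := Pdeg_succ m i
  have hdeg₂ := Pdeg_add_two m i
  have hpow : 2 ^ (i + 1) = 2 * 2 ^ i := pow_succ' 2 i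
  constructor
  · rintro ⟨hp, ⟨s, hs, rfl⟩, hdvd⟩
    have := two_mul_le_Pdeg i hp
    rcases isDelta_iff.mp hs with ⟨u, hu, rfl⟩ | ⟨v, hv, rfl⟩
    · have split : 2 ^ i * (2 * u + 1) = 2 ^ (i + 1) * u + 2 ^ i := by ring
      exact Or.inl ⟨2 ^ (i + 1) * u, ⟨by omega, ⟨u, hu, rfl⟩, by omega⟩, split.symm⟩
    · exact Or.inr ⟨hp, ⟨v, hv, by ring⟩, by omega⟩
  · rintro (⟨q, ⟨hq, ⟨u, hu, rfl⟩, hdvd⟩, rfl⟩ | ⟨hp, ⟨v, hv, rfl⟩, hdvd⟩)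
    · have hle := Nat.add_le_of_dvd_of_lt (dvd_mul_right _ u) (pow_dvd_pow 2 (by omega)) hq
      have := two_mul_le_Pdeg i (show 2 ^ (i + 1) * u + 2 ^ i < 2 ^ m by omega)
      refine ⟨by omega, ⟨2 * u + 1, (isDelta_two_mul_add_one u).mpr hu, by ring⟩, by omega⟩
    · have := two_mul_le_Pdeg i hp
      exact ⟨hp, ⟨4 * v, (isDelta_four_mul v).mpr hv, by ring⟩, by omega⟩

theorem disjoint_Pset (m i : ℕ) :
    Disjoint ((Pset m (i + 1)).map (addRightEmbedding (2 ^ i))) (Pset m (i + 2)) := by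
  simp only [Finset.disjoint_left, Finset.mem_map, addRightEmbedding_apply, Pset,
    Finset.mem_filter]
  rintro _ ⟨q, ⟨-, hq, -⟩, rfl⟩ ⟨-, hp, -⟩
  have : 2 ^ (i + 1) ∣ 2 ^ i :=
    (Nat.dvd_add_right hq).mp ((pow_dvd_pow 2 (Nat.le_succ _)).trans hp)
  exact absurd (Nat.pow_dvd_pow_iff_le_right one_lt_two |>.mp this) (by omega)

theorem sum_Pset {M : Type*} [AddCommMonoid M] {m i : ℕ} (hi : i + 2 ≤ m) (f : ℕ → M) :
    ∑ p ∈ Pset m i, f p =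
      ∑ q ∈ Pset m (i + 1), f (q + 2 ^ i) + ∑ p ∈ Pset m (i + 2), f p := by
  rw [Pset_eq_union hi, Finset.sum_union (disjoint_Pset m i), Finset.sum_map]
  rfl

theorem X_one_pow_mul_Ppoly {m i : ℕ} (hi : i + 2 ≤ m) :
    X 1 ^ 2 ^ i * Ppoly m i = X 0 ^ 2 ^ i * Ppoly m (i + 1) + Ppoly m (i + 2) := by
  calc X 1 ^ 2 ^ i * Ppoly m i = ∑ p ∈ Pset m i, weightedMonomial (Pdeg m (i + 2)) p := by
        rw [Ppoly_eq_sum, Finset.mul_sum, Pdeg_add_two]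
        refine Finset.sum_congr rfl fun p hp => X_one_pow_mul_weightedMonomial ?_ _
        exact two_mul_le_Pdeg i ((mem_Pset (by omega)).mp hp).1
    _ = ∑ q ∈ Pset m (i + 1), weightedMonomial (Pdeg m (i + 2)) (q + 2 ^ i) +
          ∑ p ∈ Pset m (i + 2), weightedMonomial (Pdeg m (i + 2)) p :=
        sum_Pset hi _
    _ = X 0 ^ 2 ^ i * Ppoly m (i + 1) + Ppoly m (i + 2) := by
        rw [Ppoly_eq_sum, Ppoly_eq_sum, Finset.mul_sum,
          show Pdeg m (i + 2) = Pdeg m (i + 1) + 2 * 2 ^ i by rw [Pdeg_add_two, Pdeg_succ]; ring]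
        simp only [X_zero_pow_mul_weightedMonomial]

theorem spoly_relation_general (m : ℕ) (i : ℕ) (hi : i + 2 ≤ m) :
    Spoly (Ppoly m i) (Ppoly m (i + 1)) = Ppoly m (i + 2) := by
  rw [spoly_Ppoly (by omega), X_one_pow_mul_Ppoly hi, add_comm, ← add_assoc,
    CharTwo.add_self_eq_zero, zero_add]

/-- For `m ≥ 2` and `0 ≤ i ≤ m - 2`, the `S`-polynomial relation
`S(P_i, P_{i+1}) = P_{i+2}` holds. -/
theorem spoly_relation (m : ℕ) (hm : 2 ≤ m) (i : ℕ) (hi : i + 2 ≤ m) :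
    Spoly (Ppoly m i) (Ppoly m (i + 1)) = Ppoly m (i + 2) :=
  spoly_relation_general m i hi
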